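/- Let σ > 0, ρ with -1 < ρ < 1, λ > 0, η ∈ ℝ, a ∈ ℝ, and w ∈ {0,1}. Then ∫_ℝ λ e^{η + u} · (∫_{-a}^{∞} f(u,v;σ,ρ) dv)^w · (∫_{-∞}^{-a} f(u,v;σ,ρ) dv)^{1-w} du = λ exp(η + σ^2/2) · Φ(a + σρ)^w · (1 - Φ(a + σρ))^{1-w}. -/

import Mathlib

open Real MeasureTheory

/-- The density of the centered bivariate normal distribution with
`Var(U) = σ²`, `Var(V) = 1` and `Cov(U,V) = ρσ`. -/
noncomputable def biNormDensity (σ ρ u v : ℝ) : ℝ :=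
  (2 * π * σ * Real.sqrt (1 - ρ ^ 2))⁻¹ *
    Real.exp (-(u ^ 2 / σ ^ 2 - 2 * ρ * u * v / σ + v ^ 2) / (2 * (1 - ρ ^ 2)))

/-- The standard normal cumulative distribution function `Φ`. -/
noncomputable def stdNormalCDF (x : ℝ) : ℝ :=
  ∫ t in Set.Iic x, (Real.sqrt (2 * π))⁻¹ * Real.exp (-t ^ 2 / 2)

namespace BN

noncomputable def g (c x : ℝ) : ℝ :=
  (c * Real.sqrt (2 * π))⁻¹ * Real.exp (-x ^ 2 / (2 * c ^ 2))

lemma g_eq (c : ℝ) : g c = fun x => (c * Real.sqrt (2 * π))⁻¹ * Real.exp (-((2 * c ^ 2)⁻¹) * x ^ 2) := by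
  funext x
  unfold g
  congr 1
  ring_nf

lemma integrable_g {c : ℝ} (hc : 0 < c) : Integrable (g c) := by
  rw [g_eq]
  exact (integrable_exp_neg_mul_sq (by positivity)).const_mul _

lemma integral_g {c : ℝ} (hc : 0 < c) : ∫ x, g c x = 1 := by
  have h2π : (0:ℝ) < 2 * π := by positivity
  rw [g_eq]
  rw [MeasureTheory.integral_const_mul, integral_gaussian]
  rw [show π / (2 * c ^ 2)⁻¹ = 2 * π * c ^ 2 by field_simp]
  rw [show (2:ℝ) * π * c ^ 2 = (2 * π) * c ^ 2 by ring, Real.sqrt_mul h2π.le,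
    Real.sqrt_sq hc.le]
  have h1 : Real.sqrt (2 * π) ≠ 0 := by positivity
  field_simp

variable {σ ρ : ℝ}

lemma f_eq1 (hσ : 0 < σ) (h1 : 0 < 1 - ρ ^ 2) (u v : ℝ) :
    biNormDensity σ ρ u v = g σ u * g (Real.sqrt (1 - ρ ^ 2)) (v - ρ * u / σ) := by
  unfold biNormDensity g
  have hs : Real.sqrt (1 - ρ ^ 2) ^ 2 = 1 - ρ ^ 2 := Real.sq_sqrt h1.le
  have hs0 : Real.sqrt (1 - ρ ^ 2) ≠ 0 := by positivity
  have h2π : Real.sqrt (2 * π) ^ 2 = 2 * π := Real.sq_sqrt (by positivity)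
  have hπ : Real.sqrt (2 * π) ≠ 0 := by positivity
  rw [mul_mul_mul_comm, ← Real.exp_add]
  congr 1
  · rw [← mul_inv]
    congr 1
    linear_combination (-σ) * Real.sqrt (1 - ρ ^ 2) * h2π
  · congr 1
    rw [hs]
    field_simp
    ring

lemma f_eq2 (hσ : 0 < σ) (h1 : 0 < 1 - ρ ^ 2) (u v : ℝ) :
    biNormDensity σ ρ u v = g 1 v * g (σ * Real.sqrt (1 - ρ ^ 2)) (u - ρ * σ * v) := by
  unfold biNormDensity g
  have hs : Real.sqrt (1 - ρ ^ 2) ^ 2 = 1 - ρ ^ 2 := Real.sq_sqrt h1.le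
  have hs0 : Real.sqrt (1 - ρ ^ 2) ≠ 0 := by positivity
  have h2π : Real.sqrt (2 * π) ^ 2 = 2 * π := Real.sq_sqrt (by positivity)
  have hπ : Real.sqrt (2 * π) ≠ 0 := by positivity
  rw [mul_mul_mul_comm, ← Real.exp_add]
  congr 1
  · rw [← mul_inv]
    congr 1
    linear_combination (-σ) * Real.sqrt (1 - ρ ^ 2) * h2π
  · congr 1
    rw [mul_pow, hs]
    field_simp
    ring

lemma tilt (hσ : 0 < σ) (h1 : 0 < 1 - ρ ^ 2) (u v : ℝ) :
    Real.exp u * biNormDensity σ ρ u v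
      = Real.exp (σ ^ 2 / 2) * biNormDensity σ ρ (u - σ ^ 2) (v - ρ * σ) := by
  unfold biNormDensity
  rw [mul_left_comm, mul_left_comm (Real.exp (σ ^ 2 / 2)), ← Real.exp_add, ← Real.exp_add]
  congr 2
  have h1' : (1 : ℝ) - ρ ^ 2 ≠ 0 := h1.ne'
  field_simp
  ring

lemma f_nonneg (hσ : 0 < σ) (h1 : 0 < 1 - ρ ^ 2) (u v : ℝ) : 0 ≤ biNormDensity σ ρ u v := by
  have h : (0:ℝ) < 2 * π * σ * Real.sqrt (1 - ρ ^ 2) :=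
    mul_pos (mul_pos (mul_pos two_pos Real.pi_pos) hσ) (Real.sqrt_pos.2 h1)
  exact mul_nonneg (inv_nonneg.2 h.le) (Real.exp_pos _).le

lemma cont : Continuous (fun p : ℝ × ℝ => biNormDensity σ ρ p.1 p.2) := by
  unfold biNormDensity
  fun_prop

lemma marginal (hσ : 0 < σ) (h1 : 0 < 1 - ρ ^ 2) (v : ℝ) :
    (∫ u, biNormDensity σ ρ u v) = g 1 v := by
  have hss : 0 < σ * Real.sqrt (1 - ρ ^ 2) := mul_pos hσ (Real.sqrt_pos.2 h1)
  simp_rw [f_eq2 hσ h1]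
  rw [MeasureTheory.integral_const_mul,
    integral_sub_right_eq_self (g (σ * Real.sqrt (1 - ρ ^ 2))) (ρ * σ * v),
    integral_g hss, mul_one]

lemma integrable_prod (hσ : 0 < σ) (h1 : 0 < 1 - ρ ^ 2) :
    Integrable (fun p : ℝ × ℝ => biNormDensity σ ρ p.1 p.2) (volume.prod volume) := by
  have hs : 0 < Real.sqrt (1 - ρ ^ 2) := Real.sqrt_pos.2 h1
  rw [MeasureTheory.integrable_prod_iff cont.aestronglyMeasurable]
  constructor
  · refine Filter.Eventually.of_forall fun u => ?_
    simp only [f_eq1 hσ h1]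
    exact ((integrable_g hs).comp_sub_right _).const_mul _
  · have he : (fun u => ∫ v, ‖biNormDensity σ ρ u v‖) = fun u => g σ u := by
      funext u
      have h2 : ∀ v, ‖biNormDensity σ ρ u v‖
          = g σ u * g (Real.sqrt (1 - ρ ^ 2)) (v - ρ * u / σ) := fun v => by
        rw [Real.norm_of_nonneg (f_nonneg hσ h1 u v), f_eq1 hσ h1]
      simp_rw [h2]
      rw [MeasureTheory.integral_const_mul,
        integral_sub_right_eq_self (g (Real.sqrt (1 - ρ ^ 2))) (ρ * u / σ),
        integral_g hs, mul_one]
    rw [he]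
    exact integrable_g hσ

lemma key (hσ : 0 < σ) (h1 : 0 < 1 - ρ ^ 2) (S : Set ℝ) :
    (∫ u, Real.exp u * ∫ v in S, biNormDensity σ ρ u v)
      = Real.exp (σ ^ 2 / 2) * ∫ v in (fun v => v + ρ * σ) ⁻¹' S, g 1 v := by
  have step1 : ∀ u, Real.exp u * (∫ v in S, biNormDensity σ ρ u v)
      = Real.exp (σ ^ 2 / 2)
        * ∫ v in (fun v => v + ρ * σ) ⁻¹' S, biNormDensity σ ρ (u - σ ^ 2) v := by
    intro u
    rw [← MeasureTheory.integral_const_mul, ← MeasureTheory.integral_const_mul]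
    simp_rw [tilt hσ h1 u]
    rw [← ((measurePreserving_add_right volume (ρ * σ)).setIntegral_preimage_emb
      (MeasurableEquiv.addRight (ρ * σ)).measurableEmbedding
      (fun y => Real.exp (σ ^ 2 / 2) * biNormDensity σ ρ (u - σ ^ 2) (y - ρ * σ)) S)]
    simp [add_sub_cancel_right]
  simp_rw [step1]
  rw [MeasureTheory.integral_const_mul]
  congr 1
  rw [integral_sub_right_eq_self (μ := volume)
    (fun u : ℝ => ∫ v in (fun v => v + ρ * σ) ⁻¹' S, biNormDensity σ ρ u v) (σ ^ 2)]
  have hint : Integrable (Function.uncurry fun u v => biNormDensity σ ρ u v)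
      (volume.prod (volume.restrict ((fun v => v + ρ * σ) ⁻¹' S))) := by
    have hμ : (volume : Measure ℝ).prod (volume.restrict ((fun v => v + ρ * σ) ⁻¹' S))
        = ((volume : Measure ℝ).prod (volume : Measure ℝ)).restrict
            ((Set.univ : Set ℝ) ×ˢ ((fun v => v + ρ * σ) ⁻¹' S)) := by
      rw [← Measure.prod_restrict, Measure.restrict_univ]
    rw [hμ]
    exact (integrable_prod hσ h1).restrict
  rw [MeasureTheory.integral_integral_swap hint]
  simp_rw [marginal hσ h1]

end BN

open BN

lemma stdCDF_eq (x : ℝ) : stdNormalCDF x = ∫ t in Set.Iic x, g 1 t := by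
  unfold stdNormalCDF g
  norm_num

lemma cdf_flip (b : ℝ) : stdNormalCDF b = ∫ t in Set.Ioi (-b), g 1 t := by
  rw [stdCDF_eq,
    ← ((Measure.measurePreserving_neg volume).setIntegral_preimage_emb
      (MeasurableEquiv.neg ℝ).measurableEmbedding (fun y => g 1 y) (Set.Iic b))]
  have hpre : (Neg.neg : ℝ → ℝ) ⁻¹' Set.Iic b = Set.Ici (-b) := by
    ext x; simp [neg_le]
  rw [hpre]
  have hev : ∀ x : ℝ, g 1 (-x) = g 1 x := fun x => by unfold g; rw [neg_sq]
  simp_rw [hev]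
  rw [MeasureTheory.integral_Ici_eq_integral_Ioi]

lemma cdf_compl (b : ℝ) : (∫ t in Set.Iic (-b), g 1 t) = 1 - stdNormalCDF b := by
  have h := intervalIntegral.integral_Iic_add_Ioi (b := -b) (μ := volume)
    ((integrable_g one_pos).integrableOn) ((integrable_g one_pos).integrableOn)
  rw [integral_g one_pos, ← cdf_flip b] at h
  linarith


/-- The per-subject integrated likelihood contribution (equation (app1_4)) in the
proof of Theorem 1: for `λ > 0` the baseline hazard value, `η` the Cox linear
predictor, `a` the probit linear predictor and binary treatment `w`,
`∫_ℝ λ e^{η+u} (∫_{-a}^∞ f dv)^w (∫_{-∞}^{-a} f dv)^{1-w} du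
  = λ exp(η + σ²/2) Φ(a+σρ)^w (1-Φ(a+σρ))^{1-w}`. -/
theorem integrated_likelihood_contribution (σ ρ lam η a : ℝ) (w : ℕ)
    (hσ : 0 < σ) (hρ₁ : -1 < ρ) (hρ₂ : ρ < 1) (hlam : 0 < lam)
    (hw : w = 0 ∨ w = 1) :
    ∫ u : ℝ, lam * Real.exp (η + u) *
        (∫ v in Set.Ioi (-a), biNormDensity σ ρ u v) ^ w *
        (∫ v in Set.Iic (-a), biNormDensity σ ρ u v) ^ (1 - w)
      = lam * Real.exp (η + σ ^ 2 / 2) * stdNormalCDF (a + σ * ρ) ^ w *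
        (1 - stdNormalCDF (a + σ * ρ)) ^ (1 - w) := by

  have h1 : 0 < 1 - ρ ^ 2 := by nlinarith
  have hpre1 : (fun v => v + ρ * σ) ⁻¹' Set.Ioi (-a) = Set.Ioi (-(a + σ * ρ)) := by
    ext x
    simp only [Set.mem_preimage, Set.mem_Ioi]
    constructor <;> intro <;> linarith
  have hpre2 : (fun v => v + ρ * σ) ⁻¹' Set.Iic (-a) = Set.Iic (-(a + σ * ρ)) := by
    ext x
    simp only [Set.mem_preimage, Set.mem_Iic]
    constructor <;> intro <;> linarith
  rcases hw with rfl | rfl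
  · simp only [pow_zero, pow_one, Nat.sub_zero, mul_one, one_mul]
    have hre : ∀ u : ℝ, lam * Real.exp (η + u) * (∫ v in Set.Iic (-a), biNormDensity σ ρ u v)
        = (lam * Real.exp η) * (Real.exp u * ∫ v in Set.Iic (-a), biNormDensity σ ρ u v) := by
      intro u; rw [Real.exp_add]; ring
    simp_rw [hre]
    rw [MeasureTheory.integral_const_mul, key hσ h1 (Set.Iic (-a)), hpre2,
      cdf_compl (a + σ * ρ), Real.exp_add]
    ring
  · simp only [pow_zero, pow_one, Nat.sub_self, mul_one]
    have hre : ∀ u : ℝ, lam * Real.exp (η + u) * (∫ v in Set.Ioi (-a), biNormDensity σ ρ u v)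
        = (lam * Real.exp η) * (Real.exp u * ∫ v in Set.Ioi (-a), biNormDensity σ ρ u v) := by
      intro u; rw [Real.exp_add]; ring
    simp_rw [hre]
    rw [MeasureTheory.integral_const_mul, key hσ h1 (Set.Ioi (-a)), hpre1,
      ← cdf_flip (a + σ * ρ), Real.exp_add]
    ring
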